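/- (Half Class Stability Theorem.) Suppose |k̂| = |p| (so that ρ₀ = 0) and |k̂ + p| > |p|. Let z : ℝ → ℓ²({n ∈ ℤ : n ≥ 1}, ℂ) be differentiable (in ℓ² norm) with z₁'(t) = i a ρ₂ z₂(t) and z_n'(t) = i a (ρ_{n−1} z_{n−1}(t) + ρ_{n+1} z_{n+1}(t)) for all n ≥ 2 and all t ∈ ℝ. Then σ = (sup_{n≥1}(−ρ_n)) / (inf_{n≥1}(−ρ_n)) satisfies 0 < σ < ∞, and ∑_{n≥1} |z_n(t)|² ≤ σ · ∑_{n≥1} |z_n(0)|² for all t ∈ ℝ; i.e. the half-class subsystem is Liapunov stable for all time. -/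

import Mathlib

noncomputable section

/-- Squared Euclidean norm `|q|² = q₁² + q₂²` of a lattice vector `q ∈ ℤ²`. -/
def nsq (q : ℤ × ℤ) : ℝ := (q.1 : ℝ)^2 + (q.2 : ℝ)^2

/-- `ρ_n = |k̂ + np|⁻² − |p|⁻²`. -/
def rho (kh p : ℤ × ℤ) (n : ℤ) : ℝ := (nsq (kh + n • p))⁻¹ - (nsq p)⁻¹

namespace HalfClassAux

open scoped ENNReal

abbrev II : Type := {n : ℤ // 1 ≤ n}
abbrev HH := lp (fun _ : II => ℂ) 2

lemma nsq_add_smul (kh p : ℤ × ℤ) (n : ℤ) :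
    nsq (kh + n • p) = ((kh.1:ℝ) + (n:ℝ) * (p.1:ℝ))^2 + ((kh.2:ℝ) + (n:ℝ) * (p.2:ℝ))^2 := by
  simp only [nsq, Prod.fst_add, Prod.snd_add, Prod.smul_fst, Prod.smul_snd, smul_eq_mul]
  push_cast
  ring

lemma rho_zero (kh p : ℤ × ℤ) (hkp : nsq kh = nsq p) : rho kh p 0 = 0 := by
  simp [rho, hkp]

lemma weight_bounds (p kh : ℤ × ℤ) (hp : p ≠ 0)
    (hkp : nsq kh = nsq p) (hout : nsq p < nsq (kh + p)) :
    (0 < -(rho kh p 1)) ∧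
    (∀ n : ℤ, 1 ≤ n → -(rho kh p 1) ≤ -(rho kh p n) ∧ -(rho kh p n) ≤ (nsq p)⁻¹) := by
  have hP : 0 < nsq p := by
    have h1 : p.1 ≠ 0 ∨ p.2 ≠ 0 := by
      by_contra hc
      push_neg at hc
      exact hp (Prod.ext_iff.2 ⟨hc.1, hc.2⟩)
    rcases h1 with h1 | h1
    · have : (p.1:ℝ) ≠ 0 := Int.cast_ne_zero.2 h1
      unfold nsq; positivity
    · have : (p.2:ℝ) ≠ 0 := Int.cast_ne_zero.2 h1
      unfold nsq; positivity
  have hN1 : nsq (kh + p) = nsq (kh + (1:ℤ) • p) := by rw [one_smul]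
  have hmono : ∀ n : ℤ, 1 ≤ n → nsq (kh + (1:ℤ) • p) ≤ nsq (kh + n • p) := by
    intro n hn
    have hn' : (1:ℝ) ≤ (n:ℝ) := by exact_mod_cast hn
    rw [nsq_add_smul, nsq_add_smul]
    have hout' := hout
    rw [hN1, nsq_add_smul] at hout'
    unfold nsq at hout' hkp hP
    push_cast at hout' hkp hP ⊢
    nlinarith [mul_nonneg (sub_nonneg.2 hn') (sub_nonneg.2 hn'), mul_nonneg (sub_nonneg.2 hn') hP.le,
      mul_nonneg (mul_nonneg (sub_nonneg.2 hn') (sub_nonneg.2 hn')) hP.le,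
      mul_nonneg (sub_nonneg.2 hn') (by nlinarith : (0:ℝ) ≤ (p.1:ℝ)^2 + (p.2:ℝ)^2 + 2*((kh.1:ℝ)*(p.1:ℝ) + (kh.2:ℝ)*(p.2:ℝ)))]
  have hPN1 : nsq p < nsq (kh + (1:ℤ) • p) := hN1 ▸ hout
  have hkey : ∀ n : ℤ, 1 ≤ n → nsq p < nsq (kh + n • p) := fun n hn => hPN1.trans_le (hmono n hn)
  constructor
  · have h2 : (nsq (kh + (1:ℤ) • p))⁻¹ < (nsq p)⁻¹ := inv_strictAnti₀ hP hPN1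
    simp only [rho]
    exact neg_pos.2 (sub_neg.2 h2)
  · intro n hn
    have hNn := hkey n hn
    constructor
    · have : (nsq (kh + n • p))⁻¹ ≤ (nsq (kh + (1:ℤ) • p))⁻¹ :=
        inv_anti₀ (hP.trans hPN1) (hmono n hn)
      simp only [rho]
      linarith
    · have h0 : 0 ≤ (nsq (kh + n • p))⁻¹ := inv_nonneg.2 (hP.trans hNn).le
      simp only [rho]
      linarith

lemma summable_norm_sq (f : HH) : Summable (fun m : II => ‖f m‖ ^ 2) := by
  have := (lp.memℓp f).summable (p := 2) (by norm_num)
  simpa [Real.rpow_two] using this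

lemma memℓp_mul {w : II → ℝ} {C : ℝ} (hw : ∀ m, |w m| ≤ C) (f : HH) :
    Memℓp (fun m => (w m : ℂ) * f m) 2 := by
  apply memℓp_gen
  have hs : Summable (fun m : II => C^2 * ‖f m‖ ^ 2) := (summable_norm_sq f).mul_left _
  have h : Summable (fun m : II => ‖(w m : ℂ) * f m‖ ^ 2) := by
    refine Summable.of_nonneg_of_le (fun m => by positivity) (fun m => ?_) hs
    have h1 : ‖(w m : ℂ) * f m‖ = |w m| * ‖f m‖ := by
      rw [norm_mul, Complex.norm_real, Real.norm_eq_abs]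
    rw [h1, mul_pow]
    have h2 : |w m|^2 ≤ C^2 := sq_le_sq' (by linarith [abs_nonneg (w m), hw m]) (hw m)
    exact mul_le_mul_of_nonneg_right h2 (sq_nonneg _)
  simpa [Real.rpow_two] using h

/-- Multiplication by a bounded real weight as a continuous linear operator on `ℓ²`. -/
def mulOp (w : II → ℝ) (C : ℝ) (hw : ∀ m, |w m| ≤ C) : HH →L[ℂ] HH :=
  LinearMap.mkContinuous
    { toFun := fun f => ⟨fun m => (w m : ℂ) * f m, memℓp_mul hw f⟩
      map_add' := fun f g => by
        apply Subtype.ext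
        funext m
        simp [lp.coeFn_add, mul_add]
        rfl
      map_smul' := fun c f => by
        apply Subtype.ext
        funext m
        simp [lp.coeFn_smul]
        ring }
    C (fun f => by
      have hC0 : 0 ≤ C := le_trans (abs_nonneg _) (hw ⟨1, le_refl 1⟩)
      refine lp.norm_le_of_tsum_le (by norm_num) (by positivity) ?_
      have hb : ∀ m : II, ‖(w m : ℂ) * f m‖ ^ ((2:ℝ≥0∞)).toReal ≤ C^2 * ‖f m‖ ^ 2 := by
        intro m
        have h1 : ‖(w m : ℂ) * f m‖ = |w m| * ‖f m‖ := by
          rw [norm_mul, Complex.norm_real, Real.norm_eq_abs]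
        simp only [Real.rpow_two, ENNReal.toReal_ofNat]
        rw [h1, mul_pow]
        have h2 : |w m|^2 ≤ C^2 := sq_le_sq' (by linarith [abs_nonneg (w m), hw m]) (hw m)
        exact mul_le_mul_of_nonneg_right h2 (sq_nonneg _)
      calc ∑' m : II, ‖(w m : ℂ) * f m‖ ^ ((2:ℝ≥0∞)).toReal
          ≤ ∑' m : II, C^2 * ‖f m‖ ^ 2 := by
            refine Summable.tsum_le_tsum hb ?_ ((summable_norm_sq f).mul_left _)
            have := memℓp_mul hw f
            simpa [Real.rpow_two] using this.summable (p := 2) (by norm_num)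
        _ = C^2 * ∑' m : II, ‖f m‖ ^ 2 := tsum_mul_left
        _ = (C * ‖f‖) ^ ((2:ℝ≥0∞)).toReal := by
            have := lp.norm_rpow_eq_tsum (p := 2) (by norm_num) f
            simp only [Real.rpow_two, ENNReal.toReal_ofNat] at this ⊢
            rw [← this, mul_pow])

lemma mulOp_apply (w : II → ℝ) (C : ℝ) (hw : ∀ m, |w m| ≤ C) (f : HH) (m : II) :
    (mulOp w C hw f) m = (w m : ℂ) * f m := rfl

/-- The telescoping quantity `G n = ρ_n ρ_{n+1} Re(i conj(y_{n+1}) y_n)`. -/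
def Gfun (kh p : ℤ × ℤ) (y : ℤ → ℂ) (n : ℤ) : ℝ :=
  rho kh p n * rho kh p (n + 1) * (Complex.I * (starRingEnd ℂ) (y (n + 1)) * y n).re

lemma alg_id (a r1 r2 r3 : ℝ) (u v w : ℂ) :
    ((starRingEnd ℂ) (((-r2 : ℝ) : ℂ) * v) * (Complex.I * (a:ℂ) * ((r1:ℂ) * u + (r3:ℂ) * w))).re
    = a * (r2*r3*(Complex.I * (starRingEnd ℂ) w * v).re
          - r1*r2*(Complex.I * (starRingEnd ℂ) v * u).re) := by
  simp [Complex.mul_re, Complex.mul_im, Complex.add_re, Complex.add_im, Complex.I_re, Complex.I_im,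
    Complex.conj_re, Complex.conj_im, Complex.ofReal_re, Complex.ofReal_im]
  ring

lemma summable_y_sq (f : HH) (y : ℤ → ℂ)
    (hy0 : ∀ n : ℤ, n ≤ 0 → y n = 0) (hyf : ∀ m : II, y m.1 = f m) :
    Summable (fun n : ℤ => ‖y n‖ ^ 2) := by
  have hg : ∀ n : ℤ, n ≤ 0 → ‖y n‖^2 = 0 := fun n hn => by rw [hy0 n hn]; simp
  have hi : Set.indicator {n : ℤ | 1 ≤ n} (fun n => ‖y n‖^2) = (fun n => ‖y n‖^2) :=
    Set.indicator_eq_self.2 (by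
      intro n hn
      simp only [Function.mem_support] at hn
      simp only [Set.mem_setOf_eq]
      by_contra hc
      exact hn (hg n (by omega)))
  rw [← hi]
  refine (summable_subtype_iff_indicator (s := {n : ℤ | 1 ≤ n})).1 ?_
  exact (summable_norm_sq f).congr fun m => by
    simp only [Function.comp_apply]
    rw [hyf m]

set_option maxHeartbeats 1000000 in
/-- Key cancellation: the weighted energy flux vanishes. -/
lemma key_sum (kh p : ℤ × ℤ) (hkp : nsq kh = nsq p) (C : ℝ)
    (hb : ∀ n : ℤ, 1 ≤ n → |rho kh p n| ≤ C) (a : ℝ) (f d : HH)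
    (y : ℤ → ℂ) (hy0 : ∀ n : ℤ, n ≤ 0 → y n = 0) (hyf : ∀ m : II, y m.1 = f m)
    (hd : ∀ m : II, d m = Complex.I * (a:ℂ) *
      ((rho kh p (m.1 - 1) : ℂ) * y (m.1 - 1) + (rho kh p (m.1 + 1) : ℂ) * y (m.1 + 1))) :
    ∑' m : II, ((starRingEnd ℂ) (((-(rho kh p m.1) : ℝ) : ℂ) * f m) * d m).re = 0 := by
  have hC0 : 0 ≤ C := le_trans (abs_nonneg _) (hb 1 le_rfl)
  set G := Gfun kh p y with hGdef
  -- G vanishes for n ≤ 0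
  have hG0 : ∀ n : ℤ, n ≤ 0 → G n = 0 := by
    intro n hn
    simp [hGdef, Gfun, hy0 n hn]
  -- summability of G
  have hysq : Summable (fun n : ℤ => ‖y n‖ ^ 2) := summable_y_sq f y hy0 hyf
  have hysq' : Summable (fun n : ℤ => ‖y (n + 1)‖ ^ 2) :=
    ((Equiv.addRight (1:ℤ)).summable_iff).2 hysq
  have hGsum : Summable G := by
    refine Summable.of_norm_bounded (g := fun n => C^2 * (‖y n‖^2 + ‖y (n+1)‖^2))
      ((hysq.add hysq').mul_left _) (fun n => ?_)
    rcases le_or_gt n 0 with hn | hn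
    · rw [hG0 n hn]
      simp only [norm_zero]
      positivity
    · have hn1 : 1 ≤ n := hn
      have h1 : |(Complex.I * (starRingEnd ℂ) (y (n+1)) * y n).re| ≤ ‖y n‖^2 + ‖y (n+1)‖^2 := by
        have := Complex.abs_re_le_norm (Complex.I * (starRingEnd ℂ) (y (n+1)) * y n)
        have hnorm : ‖Complex.I * (starRingEnd ℂ) (y (n+1)) * y n‖
            = ‖y (n+1)‖ * ‖y n‖ := by
          simp
        nlinarith [sq_nonneg (‖y n‖ - ‖y (n+1)‖), norm_nonneg (y n), norm_nonneg (y (n+1))]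
      have h2 : |rho kh p n * rho kh p (n+1)| ≤ C^2 := by
        rw [abs_mul, sq]
        exact mul_le_mul (hb n hn1) (hb (n+1) (by omega)) (abs_nonneg _) hC0
      have : ‖G n‖ = |rho kh p n * rho kh p (n+1)|
          * |(Complex.I * (starRingEnd ℂ) (y (n+1)) * y n).re| := by
        rw [hGdef]
        simp only [Gfun, Real.norm_eq_abs, abs_mul]
      rw [this]
      exact mul_le_mul h2 h1 (abs_nonneg _) (by positivity)
  have hGsum' : Summable (fun n : ℤ => G (n - 1)) := ((Equiv.subRight (1:ℤ)).summable_iff).2 hGsum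
  -- termwise identity
  have hterm : ∀ m : II, ((starRingEnd ℂ) (((-(rho kh p m.1) : ℝ) : ℂ) * f m) * d m).re
      = a * (G m.1 - G (m.1 - 1)) := by
    rintro ⟨n, hn⟩
    rw [hd ⟨n, hn⟩, ← hyf ⟨n, hn⟩]
    simp only
    rw [hGdef]
    simp only [Gfun]
    rw [show n - 1 + 1 = n by ring]
    exact alg_id a (rho kh p (n-1)) (rho kh p n) (rho kh p (n+1)) (y (n-1)) (y n) (y (n+1))
  rw [tsum_congr hterm]
  -- pass to a sum over ℤ
  have hF0 : ∀ n : ℤ, n ≤ 0 → a * (G n - G (n - 1)) = 0 := by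
    intro n hn
    rw [hG0 n hn, hG0 (n-1) (by omega)]
    ring
  have hsupp : Function.support (fun n : ℤ => a * (G n - G (n - 1))) ⊆ {n : ℤ | 1 ≤ n} := by
    intro n hn
    simp only [Function.mem_support] at hn
    simp only [Set.mem_setOf_eq]
    by_contra h
    exact hn (hF0 n (by omega))
  have h1 : ∑' m : II, a * (G m.1 - G (m.1 - 1)) = ∑' n : ℤ, a * (G n - G (n - 1)) :=
    tsum_subtype_eq_of_support_subset hsupp
  rw [h1, tsum_mul_left]
  have h2 : ∑' n : ℤ, (G n - G (n - 1)) = 0 := by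
    rw [Summable.tsum_sub hGsum hGsum']
    have hshift := (Equiv.subRight (1:ℤ)).tsum_eq G
    simp only [Equiv.subRight_apply] at hshift
    rw [hshift]
    ring
  rw [h2, mul_zero]

lemma alg_symm (r : ℝ) (u v : ℂ) :
    ((starRingEnd ℂ) ((r:ℂ) * u) * v).re = ((starRingEnd ℂ) ((r:ℂ) * v) * u).re := by
  simp [Complex.mul_re, Complex.mul_im, Complex.conj_re, Complex.conj_im,
    Complex.ofReal_re, Complex.ofReal_im]
  ring

lemma alg_norm (r : ℝ) (v : ℂ) :
    ((starRingEnd ℂ) ((r:ℂ) * v) * v).re = r * ‖v‖^2 := by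
  rw [Complex.sq_norm, Complex.normSq_apply]
  simp [Complex.mul_re, Complex.mul_im, Complex.conj_re, Complex.conj_im,
    Complex.ofReal_re, Complex.ofReal_im]
  ring

end HalfClassAux

open HalfClassAux in
/-- **Half Class Stability Theorem.** Suppose `|k̂| = |p|` (so `ρ₀ = 0`) and
`|k̂ + p| > |p|`. Then every solution of the half-class subsystem
`ż₁ = i a ρ₂ z₂`, `ż_n = i a (ρ_{n−1} z_{n−1} + ρ_{n+1} z_{n+1})` (`n ≥ 2`) in
`ℓ²({n ≥ 1}, ℂ)` satisfies `∑_{n≥1} |z_n(t)|² ≤ σ ∑_{n≥1} |z_n(0)|²` with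
`σ = sup_{n≥1}(−ρ_n)/inf_{n≥1}(−ρ_n)`, `0 < σ`. -/
theorem stmt5 (p kh : ℤ × ℤ) (hp : p ≠ 0) (hkh : kh ≠ 0)
    (hdet : p.1 * kh.2 - p.2 * kh.1 ≠ 0)
    (Γ : ℂ) (hΓ : Γ ≠ 0) (a : ℝ)
    (ha : a = (1/2) * ‖Γ‖ * ((p.1 : ℝ) * (kh.2 : ℝ) - (p.2 : ℝ) * (kh.1 : ℝ)))
    (hkp : nsq kh = nsq p)
    (hout : nsq p < nsq (kh + p))
    (z D : ℝ → lp (fun _ : {n : ℤ // 1 ≤ n} => ℂ) 2)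
    (hderiv : ∀ t : ℝ, HasDerivAt z (D t) t)
    (hD1 : ∀ t : ℝ,
      D t ⟨1, le_refl 1⟩ = Complex.I * (a : ℂ) * ((rho kh p 2 : ℂ) * z t ⟨2, by norm_num⟩))
    (hDn : ∀ (t : ℝ) (n : ℤ) (h : 2 ≤ n),
      D t ⟨n, by omega⟩ = Complex.I * (a : ℂ) *
        ((rho kh p (n - 1) : ℂ) * z t ⟨n - 1, by omega⟩ +
         (rho kh p (n + 1) : ℂ) * z t ⟨n + 1, by omega⟩))
    (σ : ℝ)
    (hσ : σ = (⨆ m : {n : ℤ // 1 ≤ n}, -(rho kh p m.1)) /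
              (⨅ m : {n : ℤ // 1 ≤ n}, -(rho kh p m.1))) :
    0 < σ ∧
    ∀ t : ℝ, ∑' m : {n : ℤ // 1 ≤ n}, ‖z t m‖^2 ≤ σ * ∑' m : {n : ℤ // 1 ≤ n}, ‖z 0 m‖^2 := by
  classical
  obtain ⟨hw1pos, hwb⟩ := weight_bounds p kh hp hkp hout
  set w : II → ℝ := fun m => -(rho kh p m.1) with hwdef
  set C : ℝ := (nsq p)⁻¹ with hCdef
  have hwpos : ∀ m : II, 0 < w m := fun m =>
    lt_of_lt_of_le hw1pos (hwb m.1 m.2).1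
  have hwle : ∀ m : II, w m ≤ C := fun m => (hwb m.1 m.2).2
  have hwabs : ∀ m : II, |w m| ≤ C := fun m => by
    rw [abs_of_pos (hwpos m)]; exact hwle m
  have hrabs : ∀ n : ℤ, 1 ≤ n → |rho kh p n| ≤ C := by
    intro n hn
    have h1 := (hwb n hn).1
    have h2 := (hwb n hn).2
    rw [abs_of_nonpos (by linarith)]
    exact h2
  set W : HH →L[ℂ] HH := mulOp w C hwabs with hWdef
  -- the conserved energy
  set E : ℝ → ℝ := fun t => (inner (𝕜 := ℂ) (W (z t)) (z t)).re with hEdef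
  -- extension of z t by zero
  set y : ℝ → ℤ → ℂ := fun t n => if h : 1 ≤ n then z t ⟨n, h⟩ else 0 with hydef
  have hy0 : ∀ t (n : ℤ), n ≤ 0 → y t n = 0 := by
    intro t n hn
    rw [hydef]
    exact dif_neg (by omega)
  have hyf : ∀ t (m : II), y t m.1 = z t m := by
    rintro t ⟨n, hn⟩
    rw [hydef]
    exact dif_pos hn
  -- the uniform formula for D
  have hDall : ∀ t (m : II), D t m = Complex.I * (a:ℂ) *
      ((rho kh p (m.1 - 1) : ℂ) * y t (m.1 - 1) + (rho kh p (m.1 + 1) : ℂ) * y t (m.1 + 1)) := by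
    rintro t ⟨n, hn⟩
    rcases eq_or_lt_of_le hn with h1 | h2
    · -- n = 1
      have hn1 : n = 1 := h1.symm
      subst hn1
      simp only
      have e0 : rho kh p (1 - 1) = 0 := by
        rw [show (1:ℤ) - 1 = 0 by ring]
        exact rho_zero kh p hkp
      have e2 : y t (1 + 1) = z t ⟨2, by norm_num⟩ := by
        rw [hydef]
        exact dif_pos (by norm_num)
      rw [show ((1:ℤ) - 1) = 0 by ring] at *
      rw [hD1 t, e0, e2]
      push_cast
      ring
    · -- n ≥ 2
      have hn2 : 2 ≤ n := h2
      have e1 : y t (n - 1) = z t ⟨n - 1, by omega⟩ := by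
        rw [hydef]; exact dif_pos (by omega)
      have e2 : y t (n + 1) = z t ⟨n + 1, by omega⟩ := by
        rw [hydef]; exact dif_pos (by omega)
      simp only
      rw [e1, e2]
      exact hDn t n hn2
  -- derivative of E is zero
  have hEderiv : ∀ t : ℝ, HasDerivAt E 0 t := by
    intro t
    have hWz : HasDerivAt (fun s => W (z s)) (W (D t)) t :=
      ((W.restrictScalars ℝ).hasFDerivAt.comp_hasDerivAt t (hderiv t))
    have hinner : HasDerivAt (fun s => (inner (𝕜 := ℂ) (W (z s)) (z s) : ℂ))
        ((inner (𝕜 := ℂ) (W (z t)) (D t) : ℂ) + (inner (𝕜 := ℂ) (W (D t)) (z t) : ℂ)) t :=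
      HasDerivAt.inner ℂ hWz (hderiv t)
    have hre : HasDerivAt E
        (((inner (𝕜 := ℂ) (W (z t)) (D t) : ℂ) + (inner (𝕜 := ℂ) (W (D t)) (z t) : ℂ)).re) t :=
      (Complex.reCLM.hasFDerivAt.comp_hasDerivAt t hinner)
    have hS : ∀ (u v : HH), (∀ m : II, (inner (𝕜 := ℂ) (u m) (v m) : ℂ)
        = (starRingEnd ℂ) (((-(rho kh p m.1) : ℝ) : ℂ) * z t m) * D t m) →
        (inner (𝕜 := ℂ) u v : ℂ).re = 0 := by
      intro u v huv
      have hsummable := lp.summable_inner (𝕜 := ℂ) u v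
      calc (inner (𝕜 := ℂ) u v : ℂ).re
          = ∑' m : II, (inner (𝕜 := ℂ) (u m) (v m) : ℂ).re := by
            rw [lp.inner_eq_tsum]
            exact Complex.reCLM.map_tsum hsummable
        _ = ∑' m : II, ((starRingEnd ℂ) (((-(rho kh p m.1) : ℝ) : ℂ) * z t m) * D t m).re :=
            tsum_congr (fun m => by rw [huv m])
        _ = 0 := key_sum kh p hkp C hrabs a (z t) (D t) (y t) (hy0 t) (hyf t) (hDall t)
    have hS1 : (inner (𝕜 := ℂ) (W (z t)) (D t) : ℂ).re = 0 := by
      refine hS _ _ (fun m => ?_)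
      rw [RCLike.inner_apply, mulOp_apply]
      exact mul_comm _ _
    have hS2 : (inner (𝕜 := ℂ) (W (D t)) (z t) : ℂ).re = 0 := by
      have h1 : (inner (𝕜 := ℂ) (W (D t)) (z t) : ℂ).re
          = ∑' m : II, (inner (𝕜 := ℂ) ((W (D t)) m) ((z t) m) : ℂ).re := by
        rw [lp.inner_eq_tsum]
        exact Complex.reCLM.map_tsum (lp.summable_inner (𝕜 := ℂ) (W (D t)) (z t))
      rw [h1]
      have h2 : ∀ m : II, (inner (𝕜 := ℂ) ((W (D t)) m) ((z t) m) : ℂ).re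
          = ((starRingEnd ℂ) (((-(rho kh p m.1) : ℝ) : ℂ) * z t m) * D t m).re := by
        intro m
        rw [RCLike.inner_apply, mulOp_apply, mul_comm ((z t) m)]
        exact alg_symm _ _ _
      rw [tsum_congr h2]
      exact key_sum kh p hkp C hrabs a (z t) (D t) (y t) (hy0 t) (hyf t) (hDall t)
    have hzero : (((inner (𝕜 := ℂ) (W (z t)) (D t) : ℂ)
        + (inner (𝕜 := ℂ) (W (D t)) (z t) : ℂ)).re) = 0 := by
      rw [Complex.add_re, hS1, hS2, add_zero]
    rw [← hzero]
    exact hre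
  -- E is constant
  have hEconst : ∀ t : ℝ, E t = E 0 := by
    intro t
    exact is_const_of_deriv_eq_zero (fun s => (hEderiv s).differentiableAt)
      (fun s => (hEderiv s).deriv) t 0
  -- E as a weighted sum
  have hEsum : ∀ t : ℝ, E t = ∑' m : II, w m * ‖z t m‖^2 := by
    intro t
    calc E t = ∑' m : II, (inner (𝕜 := ℂ) ((W (z t)) m) ((z t) m) : ℂ).re := by
          rw [hEdef]
          simp only
          rw [lp.inner_eq_tsum]
          exact Complex.reCLM.map_tsum (lp.summable_inner (𝕜 := ℂ) (W (z t)) (z t))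
      _ = ∑' m : II, w m * ‖z t m‖^2 := by
          refine tsum_congr (fun m => ?_)
          rw [RCLike.inner_apply, mulOp_apply, mul_comm ((z t) m)]
          exact alg_norm _ _
  -- boundedness facts for the weights
  have hbddB : BddBelow (Set.range w) := ⟨0, by rintro - ⟨m, rfl⟩; exact (hwpos m).le⟩
  have hbddA : BddAbove (Set.range w) := ⟨C, by rintro - ⟨m, rfl⟩; exact hwle m⟩
  have hinf_pos : 0 < ⨅ m, w m :=
    lt_of_lt_of_le hw1pos (le_ciInf (fun m => (hwb m.1 m.2).1))
  have hsup_pos : 0 < ⨆ m, w m :=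
    lt_of_lt_of_le (hwpos ⟨1, le_refl 1⟩) (le_ciSup hbddA ⟨1, le_refl 1⟩)
  have hσpos : 0 < σ := by
    rw [hσ]
    exact div_pos hsup_pos hinf_pos
  refine ⟨hσpos, fun t => ?_⟩
  -- summability facts
  have hsum_t : Summable (fun m : II => ‖z t m‖^2) := summable_norm_sq (z t)
  have hsum_0 : Summable (fun m : II => ‖z 0 m‖^2) := summable_norm_sq (z 0)
  have hsum_wt : Summable (fun m : II => w m * ‖z t m‖^2) := by
    refine Summable.of_nonneg_of_le (fun m => mul_nonneg (hwpos m).le (sq_nonneg _)) (fun m => ?_) (hsum_t.mul_left C)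
    exact mul_le_mul_of_nonneg_right (hwle m) (sq_nonneg _)
  have hsum_w0 : Summable (fun m : II => w m * ‖z 0 m‖^2) := by
    refine Summable.of_nonneg_of_le (fun m => mul_nonneg (hwpos m).le (sq_nonneg _)) (fun m => ?_) (hsum_0.mul_left C)
    exact mul_le_mul_of_nonneg_right (hwle m) (sq_nonneg _)
  -- lower bound on E t
  have hlow : (⨅ m, w m) * ∑' m : II, ‖z t m‖^2 ≤ E t := by
    rw [hEsum t, ← tsum_mul_left]
    refine Summable.tsum_le_tsum (fun m => ?_) (hsum_t.mul_left _) hsum_wt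
    exact mul_le_mul_of_nonneg_right (ciInf_le hbddB m) (sq_nonneg _)
  -- upper bound on E 0
  have hup : E 0 ≤ (⨆ m, w m) * ∑' m : II, ‖z 0 m‖^2 := by
    rw [hEsum 0, ← tsum_mul_left]
    refine Summable.tsum_le_tsum (fun m => ?_) hsum_w0 (hsum_0.mul_left _)
    exact mul_le_mul_of_nonneg_right (le_ciSup hbddA m) (sq_nonneg _)
  have hchain : (⨅ m, w m) * ∑' m : II, ‖z t m‖^2 ≤ (⨆ m, w m) * ∑' m : II, ‖z 0 m‖^2 :=
    le_trans hlow (le_trans (le_of_eq (hEconst t)) hup)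
  rw [hσ, div_mul_eq_mul_div, le_div_iff₀ hinf_pos]
  nlinarith [hchain]
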